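/- Let v_1, ..., v_6 be unit vectors in ℝ³ that are equiangular with common angle 1/√5 and whose rank-one projections v_i v_iᵀ span the symmetric subspace S_3 of M_3(ℂ). Then there exists z ∈ ℂ with |z| = 1 such that the six matrices U_i := I_3 − (1−z)·v_i v_iᵀ are unitary, pairwise trace-orthogonal, and moreover there is no unitary matrix V ∈ M_3(ℂ) with tr(U_i* V) = 0 for all i = 1, ..., 6. (Under the Choi–Jamiolkowski isomorphism, the U_i are the image of a UMEB of cardinality 6 in ℂ³ ⊗ ℂ³.) -/

import Mathlib

open Matrix

/-- The symmetric subspace `S_d` of `M_d(ℂ)`: matrices `A` with `Aᵀ = A`. -/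
noncomputable def symMatrices (d : ℕ) : Submodule ℂ (Matrix (Fin d) (Fin d) ℂ) where
  carrier := {A : Matrix (Fin d) (Fin d) ℂ | Aᵀ = A}
  add_mem' := by
    intro a b ha hb
    simp only [Set.mem_setOf_eq, Matrix.transpose_add] at *
    rw [ha, hb]
  zero_mem' := by simp
  smul_mem' := by
    intro c A hA
    simp only [Set.mem_setOf_eq, Matrix.transpose_smul] at *
    rw [hA]

/-- The complex rank-one projection `v vᵀ` associated to a real vector `v`. -/
noncomputable def realProj {d : ℕ} (v : Fin d → ℝ) : Matrix (Fin d) (Fin d) ℂ :=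
  (Matrix.vecMulVec v v).map Complex.ofReal

/-! Each `Uᵢ = 1 - (1 - z) Pᵢ` is unitary for any unimodular `z` since `Pᵢ = vᵢ vᵢᵀ` is an
orthogonal projection, and `tr(Pᵢ Pⱼ) = 1/5` gives `tr(Uᵢᴴ Uⱼ) = (7 + 8 Re z) / 5`, so take
`Re z = -7/8`. If a unitary `V` were trace-orthogonal to every `Uᵢ`, then `tr(Pᵢ V) = c` for one
constant `c`, so `tr(A (V - c)) = 0` for all `A` in the span of the `Pᵢ`, i.e. for every symmetric
`A`; hence `V - c` is antisymmetric. Taking traces forces `c = 0`, and an antisymmetric `3 × 3`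
matrix is singular. -/

theorem IsSelfAdjoint.star_one_sub_smul {𝕜 R : Type*} [CommSemiring 𝕜] [StarRing 𝕜] [Ring R]
    [StarRing R] [Module 𝕜 R] [StarModule 𝕜 R] {p : R} (hp : IsSelfAdjoint p) (a : 𝕜) :
    star (1 - a • p) = 1 - star a • p := by
  rw [star_sub, star_one, star_smul, hp.star_eq]

theorem IsStarProjection.one_sub_smul_mem_unitary {𝕜 R : Type*} [CommRing 𝕜] [StarRing 𝕜]
    [Ring R] [StarRing R] [Algebra 𝕜 R] [StarModule 𝕜 R] {p : R} (hp : IsStarProjection p)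
    {z : 𝕜} (hz : z ∈ unitary 𝕜) : 1 - (1 - z) • p ∈ unitary R := by
  have hzz : star z * z = 1 := hz.1
  have hmul : ∀ a b : 𝕜, a + b - a * b = 0 → (1 - a • p) * (1 - b • p) = 1 := by
    intro a b hab
    simp only [mul_sub, sub_mul, one_mul, mul_one, smul_mul_assoc, mul_smul_comm,
      hp.isIdempotentElem.eq]
    linear_combination (norm := module) -(hab • p)
  rw [Unitary.mem_iff, hp.isSelfAdjoint.star_one_sub_smul, star_sub, star_one]
  constructor <;> apply hmul <;> linear_combination -hzz

theorem Complex.exists_norm_eq_one_re_eq {r : ℝ} (hr : |r| ≤ 1) :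
    ∃ z : ℂ, ‖z‖ = 1 ∧ z.re = r := by
  refine ⟨⟨r, √(1 - r ^ 2)⟩, ?_, rfl⟩
  have hr2 : r ^ 2 ≤ 1 := by nlinarith [abs_nonneg r, sq_abs r]
  rw [Complex.norm_def, Complex.normSq_mk, ← sq, ← sq, Real.sq_sqrt (by linarith)]
  simp

namespace Matrix

variable {n R : Type*} [Fintype n]

theorem trace_one_sub_smul_mul_one_sub_smul [DecidableEq n] [CommRing R] (a b : R)
    (P Q : Matrix n n R) :
    trace ((1 - a • P) * (1 - b • Q))
      = Fintype.card n - a * trace P - b * trace Q + a * b * trace (P * Q) := by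
  simp only [sub_mul, mul_sub, one_mul, mul_one, smul_mul_assoc, mul_smul_comm,
    trace_sub, trace_smul, trace_one, smul_eq_mul]
  ring

theorem trace_mul_eq_zero_of_mem_span [CommRing R] {ι : Type*} {P : ι → Matrix n n R}
    {M : Matrix n n R} (h : ∀ i, trace (P i * M) = 0) {A : Matrix n n R}
    (hA : A ∈ Submodule.span R (Set.range P)) : trace (A * M) = 0 := by
  induction hA using Submodule.span_induction with
  | mem x hx => obtain ⟨i, rfl⟩ := hx; exact h i
  | zero => simp
  | add x y _ _ hx hy => rw [add_mul, trace_add, hx, hy, add_zero]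
  | smul a x _ hx => rw [smul_mul_assoc, trace_smul, hx, smul_zero]

theorem transpose_eq_neg_of_forall_trace_mul_eq_zero [CommRing R] [PartialOrder R] [StarRing R]
    [StarOrderedRing R] [NoZeroDivisors R] {M : Matrix n n R}
    (h : ∀ A : Matrix n n R, Aᵀ = A → trace (A * M) = 0) : Mᵀ = -M := by
  set S := M + Mᵀ
  -- `Sᴴ` is again symmetric, and pairing `S` with it gives the Frobenius norm of `S`.
  have hS : Sᴴᵀ = Sᴴ := by
    rw [← conjTranspose_transpose_eq_transpose_conjTranspose, transpose_add, transpose_transpose,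
      add_comm]
  have h₁ : trace (Sᴴ * M) = 0 := h _ hS
  have h₂ : trace (Sᴴ * Mᵀ) = 0 := by
    rw [← trace_transpose, transpose_mul, transpose_transpose, trace_mul_comm, hS, h₁]
  have hS0 : S = 0 := by
    rw [← trace_conjTranspose_mul_self_eq_zero_iff, mul_add, trace_add, h₁, h₂, add_zero]
  exact eq_neg_of_add_eq_zero_right hS0

theorem det_eq_zero_of_transpose_eq_neg [DecidableEq n] [CommRing R] [NoZeroDivisors R]
    [CharZero R] (hn : Odd (Fintype.card n)) {M : Matrix n n R} (hM : Mᵀ = -M) : M.det = 0 := by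
  have h := M.det_transpose
  rw [hM, det_neg, hn.neg_one_pow, neg_one_mul] at h
  exact CharZero.neg_eq_self_iff.mp h

end Matrix

open Matrix

section realProj

variable {d : ℕ} (u w : Fin d → ℝ)

theorem realProj_conjTranspose : (realProj u)ᴴ = realProj u := by
  ext i j
  simp [realProj, conjTranspose_apply, vecMulVec_apply, mul_comm]

theorem realProj_mul_realProj :
    realProj u * realProj w = ((u ⬝ᵥ w : ℝ) : ℂ) • (vecMulVec u w).map Complex.ofReal := by
  ext i j
  simp only [realProj, map_apply, vecMulVec_apply, mul_apply, Matrix.smul_apply, dotProduct,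
    smul_eq_mul]
  push_cast
  rw [Finset.sum_mul]
  exact Finset.sum_congr rfl fun k _ => by ring

theorem trace_map_vecMulVec_ofReal :
    trace ((vecMulVec u w).map Complex.ofReal) = ((u ⬝ᵥ w : ℝ) : ℂ) := by
  simp [trace, vecMulVec_apply, dotProduct]

theorem trace_realProj : trace (realProj u) = ((u ⬝ᵥ u : ℝ) : ℂ) :=
  trace_map_vecMulVec_ofReal u u

theorem trace_realProj_mul_realProj :
    trace (realProj u * realProj w) = ((u ⬝ᵥ w : ℝ) : ℂ) ^ 2 := by
  rw [realProj_mul_realProj, trace_smul, trace_map_vecMulVec_ofReal, smul_eq_mul, sq]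

variable {u} in
theorem isStarProjection_realProj (hu : u ⬝ᵥ u = 1) : IsStarProjection (realProj u) where
  isIdempotentElem := by
    rw [IsIdempotentElem, realProj_mul_realProj, hu, Complex.ofReal_one, one_smul, realProj]
  isSelfAdjoint := realProj_conjTranspose u

end realProj

open scoped ComplexOrder in
theorem not_exists_unitary_forall_trace_mul_eq_zero {d : ℕ} (hd : Odd d) {ι : Type*}
    {P : ι → Matrix (Fin d) (Fin d) ℂ} (htr : ∀ i, trace (P i) = 1)
    (hspan : Submodule.span ℂ (Set.range P) = symMatrices d) {w : ℂ} (hw₀ : w ≠ 0)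
    (hwd : w ≠ d) :
    ¬ ∃ V ∈ unitaryGroup (Fin d) ℂ, ∀ i, trace ((1 - w • P i) * V) = 0 := by
  rintro ⟨V, hV, hVP⟩
  set c := trace V / w
  have hPV : ∀ i, trace (P i * V) = c := fun i => by
    have h := hVP i
    rw [sub_mul, one_mul, smul_mul_assoc, trace_sub, trace_smul, smul_eq_mul, sub_eq_zero] at h
    rw [show c = trace V / w from rfl, h, mul_div_cancel_left₀ _ hw₀]
  have hskew : (V - c • 1)ᵀ = -(V - c • 1) := by
    refine transpose_eq_neg_of_forall_trace_mul_eq_zero fun A hA => ?_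
    refine trace_mul_eq_zero_of_mem_span (fun i => ?_) (by rwa [hspan])
    rw [mul_sub, mul_smul_comm, mul_one, trace_sub, trace_smul, hPV, htr, smul_eq_mul, mul_one,
      sub_self]
  have htrV : trace V = d * c := by
    have h := congrArg trace hskew
    rw [trace_transpose, trace_neg, CharZero.eq_neg_self_iff, trace_sub, trace_smul, trace_one,
      Fintype.card_fin, smul_eq_mul, sub_eq_zero] at h
    rw [h, mul_comm]
  have hc : c = 0 := by
    have hwc : w * c = d * c := by rw [← htrV, mul_div_cancel₀ _ hw₀]
    exact (mul_eq_mul_right_iff.mp hwc).resolve_left hwd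
  rw [hc, zero_smul, sub_zero] at hskew
  have hdet := det_eq_zero_of_transpose_eq_neg (by rwa [Fintype.card_fin]) hskew
  exact (UnitaryGroup.det_isUnit ⟨V, hV⟩).ne_zero hdet

/-- Bravyi–Smolin UMEB in dimension 3: six maximal real equiangular lines
in ℝ³ yield, for some unimodular z, six pairwise trace-orthogonal unitaries
U_i = I₃ − (1−z) v_i v_iᵀ with no unitary trace-orthogonal to all of them. -/
theorem bravyi_smolin_UMEB
    (v : Fin 6 → (Fin 3 → ℝ))
    (hunit : ∀ i, v i ⬝ᵥ v i = 1)
    (hang : ∀ i j, i ≠ j → |v i ⬝ᵥ v j| = 1 / Real.sqrt 5)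
    (hspan : Submodule.span ℂ (Set.range fun i => realProj (v i)) = symMatrices 3) :
    ∃ z : ℂ, ‖z‖ = 1 ∧
      (∀ i, (1 - (1 - z) • realProj (v i)) ∈ Matrix.unitaryGroup (Fin 3) ℂ) ∧
      (∀ i j, i ≠ j →
        Matrix.trace ((1 - (1 - z) • realProj (v i))ᴴ * (1 - (1 - z) • realProj (v j))) = 0) ∧
      ¬ ∃ V : Matrix (Fin 3) (Fin 3) ℂ,
          V ∈ Matrix.unitaryGroup (Fin 3) ℂ ∧
          ∀ i, Matrix.trace ((1 - (1 - z) • realProj (v i))ᴴ * V) = 0 := by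
  obtain ⟨z, hz, hre⟩ := Complex.exists_norm_eq_one_re_eq (r := -7 / 8) (by norm_num [abs_div])
  have hzz : star z * z = 1 := by rw [Complex.star_def, Complex.conj_mul', hz]; norm_num
  have hP := fun i => isStarProjection_realProj (hunit i)
  have hstar : ∀ i, (1 - (1 - z) • realProj (v i))ᴴ = 1 - (1 - star z) • realProj (v i) :=
    fun i => by
      rw [← star_eq_conjTranspose, (hP i).isSelfAdjoint.star_one_sub_smul, star_sub, star_one]
  have htr : ∀ i, trace (realProj (v i)) = 1 := fun i => by
    rw [trace_realProj, hunit i, Complex.ofReal_one]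
  have htr₂ : ∀ i j, i ≠ j → trace (realProj (v i) * realProj (v j)) = 1 / 5 := fun i j hij => by
    rw [trace_realProj_mul_realProj, ← Complex.ofReal_pow, ← sq_abs, hang i j hij, div_pow,
      Real.sq_sqrt (by norm_num)]
    norm_num
  refine ⟨z, hz, fun i => (hP i).one_sub_smul_mem_unitary (Unitary.mem_iff_star_mul_self.mpr hzz),
    fun i j hij => ?_, ?_⟩
  · have hsum : z + star z = -7 / 4 := by
      rw [Complex.star_def, Complex.add_conj, hre]; norm_num
    rw [hstar, trace_one_sub_smul_mul_one_sub_smul, htr, htr, htr₂ i j hij, Fintype.card_fin]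
    linear_combination (1 / 5 : ℂ) * hzz + (4 / 5 : ℂ) * hsum
  · simp only [hstar]
    refine not_exists_unitary_forall_trace_mul_eq_zero (by decide) htr hspan ?_ ?_ <;>
      · intro h
        have := congrArg Complex.re h
        norm_num [hre] at this
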